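/- arXiv:2003.12970 — 4 statements merged into one kernel-verified Lean document; each statement's English description precedes it below -/
import Mathlib

section
/- The loss in mutual information after co-clustering equals the Kullback–Leibler divergence between the original distribution and the approximating distribution: ℓ_A(C_X, C_W) = I(p) − I(p*) = D(p ‖ p̂). -/
open scoped BigOperators

noncomputable section

/-- Kullback–Leibler divergence `D(g‖h)` between nonnegative functions on a finite type,
`D(g‖h) = ∑_{t : g t > 0} g t * log (g t / h t)`, with the convention `D(g‖h) = ⊤`
whenever `g t > 0 = h t` for some `t`. -/
def KLdiv {T : Type*} [Fintype T] (g h : T → ℝ) : EReal :=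
  if ∃ t, 0 < g t ∧ h t = 0 then ⊤
  else ((∑ t ∈ Finset.univ.filter (fun t => 0 < g t),
      g t * Real.log (g t / h t) : ℝ) : EReal)

/-- Row marginal `p₁(x) = ∑_w p(x,w)`. -/
def marg₁ {A B : Type*} [Fintype B] (p : A × B → ℝ) (x : A) : ℝ := ∑ w, p (x, w)

/-- Column marginal `p₂(w) = ∑_x p(x,w)`. -/
def marg₂ {A B : Type*} [Fintype A] (p : A × B → ℝ) (w : B) : ℝ := ∑ x, p (x, w)

/-- Co-clustered distribution `p*(x*,w*) = ∑_{x : C_X x = x*} ∑_{w : C_W w = w*} p(x,w)`. -/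
def coclust {A B As Bs : Type*} [Fintype A] [Fintype B] [DecidableEq As] [DecidableEq Bs]
    (p : A × B → ℝ) (CX : A → As) (CW : B → Bs) : As × Bs → ℝ :=
  fun c => ∑ x ∈ Finset.univ.filter (fun x => CX x = c.1),
             ∑ w ∈ Finset.univ.filter (fun w => CW w = c.2), p (x, w)

/-- Approximating distribution
`p̂(x,w) = p*(C_X x, C_W w) · p₁(x) · p₂(w) / (p₁*(C_X x) · p₂*(C_W w))`. -/
def approx {A B As Bs : Type*} [Fintype A] [Fintype B] [Fintype As] [Fintype Bs]
    [DecidableEq As] [DecidableEq Bs]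
    (p : A × B → ℝ) (CX : A → As) (CW : B → Bs) : A × B → ℝ :=
  fun c =>
    coclust p CX CW (CX c.1, CW c.2) * marg₁ p c.1 * marg₂ p c.2 /
      (marg₁ (coclust p CX CW) (CX c.1) * marg₂ (coclust p CX CW) (CW c.2))

/-- Conditional distribution `p(w|x) = p(x,w)/p₁(x)` on `B`. -/
def condRow {A B : Type*} [Fintype B] (p : A × B → ℝ) (x : A) : B → ℝ :=
  fun w => p (x, w) / marg₁ p x

/-- Conditional distribution `p(x|w) = p(x,w)/p₂(w)` on `A`. -/
def condCol {A B : Type*} [Fintype A] (p : A × B → ℝ) (w : B) : A → ℝ :=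
  fun x => p (x, w) / marg₂ p w

/-- Conditional approximating distribution
`p̂(w|x*) = p*(x*, C_W w) · p₂(w) / (p₁*(x*) · p₂*(C_W w))` on `B`. -/
def approxCondRow {A B As Bs : Type*} [Fintype A] [Fintype B] [Fintype As] [Fintype Bs]
    [DecidableEq As] [DecidableEq Bs]
    (p : A × B → ℝ) (CX : A → As) (CW : B → Bs) (xs : As) : B → ℝ :=
  fun w =>
    coclust p CX CW (xs, CW w) * marg₂ p w /
      (marg₁ (coclust p CX CW) xs * marg₂ (coclust p CX CW) (CW w))

/-- Conditional approximating distribution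
`p̂(x|w*) = p*(C_X x, w*) · p₁(x) / (p₂*(w*) · p₁*(C_X x))` on `A`. -/
def approxCondCol {A B As Bs : Type*} [Fintype A] [Fintype B] [Fintype As] [Fintype Bs]
    [DecidableEq As] [DecidableEq Bs]
    (p : A × B → ℝ) (CX : A → As) (CW : B → Bs) (ws : Bs) : A → ℝ :=
  fun x =>
    coclust p CX CW (CX x, ws) * marg₁ p x /
      (marg₂ (coclust p CX CW) ws * marg₁ (coclust p CX CW) (CX x))

/-- Mutual information `I(p) = ∑_{x,w} p(x,w) · log (p(x,w)/(p₁(x)·p₂(w)))`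
(summing over all pairs; used for the strictly positive original distribution). -/
def mutualInfoFull {A B : Type*} [Fintype A] [Fintype B] (p : A × B → ℝ) : ℝ :=
  ∑ x, ∑ w, p (x, w) * Real.log (p (x, w) / (marg₁ p x * marg₂ p w))

/-- Mutual information `I(p*) = ∑_{(x*,w*) : p*(x*,w*) > 0} p*(x*,w*) ·
log (p*(x*,w*)/(p₁*(x*)·p₂*(w*)))` (summing only over positive entries). -/
def mutualInfoPos {A B : Type*} [Fintype A] [Fintype B] (p : A × B → ℝ) : ℝ :=
  ∑ c ∈ Finset.univ.filter (fun c : A × B => 0 < p c),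
    p c * Real.log (p c / (marg₁ p c.1 * marg₂ p c.2))

/-- The co-clustering objective `ℓ_A(C_X, C_W) = I(p) − I(p*)`. -/
def lossA {A B As Bs : Type*} [Fintype A] [Fintype B] [Fintype As] [Fintype Bs]
    [DecidableEq As] [DecidableEq Bs]
    (p : A × B → ℝ) (CX : A → As) (CW : B → Bs) : ℝ :=
  mutualInfoFull p - mutualInfoPos (coclust p CX CW)

/-- The elastic coupled co-clustering objective
`ℓ_T(C_Y, C_Z) = I(q) − I(q*) + α·D(q₁*‖π) + β·D(q₂*‖ρ)`. -/
def lossT {A B As Bs : Type*} [Fintype A] [Fintype B] [Fintype As] [Fintype Bs]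
    [DecidableEq As] [DecidableEq Bs]
    (q : A × B → ℝ) (CY : A → As) (CZ : B → Bs) (π : As → ℝ) (ρ : Bs → ℝ)
    (α β : ℝ) : EReal :=
  ((mutualInfoFull q - mutualInfoPos (coclust q CY CZ) : ℝ) : EReal)
    + (α : EReal) * KLdiv (marg₁ (coclust q CY CZ)) π
    + (β : EReal) * KLdiv (marg₂ (coclust q CY CZ)) ρ

end

/-- The loss in mutual information after co-clustering equals the KL divergence
between the original distribution and the approximating distribution:
`ℓ_A(C_X, C_W) = I(p) − I(p*) = D(p ‖ p̂)`. -/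
theorem loss_eq_KL {X W Xs Ws : Type*} [Fintype X] [Fintype W] [Nonempty X] [Nonempty W]
    [Fintype Xs] [Fintype Ws] [DecidableEq Xs] [DecidableEq Ws]
    (p : X × W → ℝ) (hpos : ∀ c, 0 < p c) (hsum : ∑ c, p c = 1)
    (CX : X → Xs) (CW : W → Ws) :
    ((lossA p CX CW : ℝ) : EReal) = KLdiv p (approx p CX CW) := by
  classical
  set q := coclust p CX CW with hq
  have hq_nonneg : ∀ d, 0 ≤ q d := by
    intro d
    exact Finset.sum_nonneg fun x _ => Finset.sum_nonneg fun w _ => (hpos _).le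
  have hm1 : ∀ x, 0 < marg₁ p x := fun x =>
    Finset.sum_pos (fun w _ => hpos _) Finset.univ_nonempty
  have hm2 : ∀ w, 0 < marg₂ p w := fun w =>
    Finset.sum_pos (fun x _ => hpos _) Finset.univ_nonempty
  have hqpos : ∀ c : X × W, 0 < q (CX c.1, CW c.2) := by
    intro c
    have h1 : p c ≤ ∑ w ∈ Finset.univ.filter (fun w => CW w = CW c.2), p (c.1, w) := by
      have := Finset.single_le_sum (f := fun w => p (c.1, w))
        (fun w _ => (hpos _).le) (show c.2 ∈ Finset.univ.filter (fun w => CW w = CW c.2) by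
          simp)
      simpa using this
    have h2 : (∑ w ∈ Finset.univ.filter (fun w => CW w = CW c.2), p (c.1, w)) ≤
        q (CX c.1, CW c.2) := by
      exact Finset.single_le_sum
        (f := fun x => ∑ w ∈ Finset.univ.filter (fun w => CW w = CW c.2), p (x, w))
        (fun x _ => Finset.sum_nonneg fun w _ => (hpos _).le)
        (show c.1 ∈ Finset.univ.filter (fun x => CX x = CX c.1) by simp)
    exact lt_of_lt_of_le (hpos c) (h1.trans h2)
  have hM1 : ∀ d : Xs × Ws, 0 < q d → 0 < marg₁ q d.1 := by
    intro d hd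
    have : q d ≤ marg₁ q d.1 := by
      have := Finset.single_le_sum (f := fun w => q (d.1, w))
        (fun w _ => hq_nonneg _) (Finset.mem_univ d.2)
      simpa [marg₁] using this
    linarith
  have hM2 : ∀ d : Xs × Ws, 0 < q d → 0 < marg₂ q d.2 := by
    intro d hd
    have : q d ≤ marg₂ q d.2 := by
      have := Finset.single_le_sum (f := fun x => q (x, d.2))
        (fun x _ => hq_nonneg _) (Finset.mem_univ d.1)
      simpa [marg₂] using this
    linarith
  have happos : ∀ c : X × W, 0 < approx p CX CW c := by
    intro c
    have h1 := hqpos c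
    have h2 := hM1 _ h1
    have h3 := hM2 _ h1
    have h4 := hm1 c.1
    have h5 := hm2 c.2
    simp only [Prod.fst, Prod.snd] at h2 h3
    unfold approx
    rw [← hq]
    positivity
  have hcond : ¬ ∃ t, 0 < p t ∧ approx p CX CW t = 0 := by
    rintro ⟨t, -, ht⟩
    exact (happos t).ne' ht
  have hfilter : Finset.univ.filter (fun t : X × W => 0 < p t) = Finset.univ :=
    Finset.filter_true_of_mem fun t _ => hpos t
  rw [KLdiv, if_neg hcond, hfilter]
  rw [EReal.coe_eq_coe_iff]
  have key : ∀ c : X × W, p c * Real.log (p c / approx p CX CW c)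
      = p c * Real.log (p c / (marg₁ p c.1 * marg₂ p c.2))
        - p c * Real.log (q (CX c.1, CW c.2) /
            (marg₁ q (CX c.1) * marg₂ q (CW c.2))) := by
    intro c
    have h1 := hqpos c
    have h2 := hM1 _ h1
    have h3 := hM2 _ h1
    have h4 := hm1 c.1
    have h5 := hm2 c.2
    simp only [Prod.fst, Prod.snd] at h2 h3
    have hne : p c / approx p CX CW c
        = (p c / (marg₁ p c.1 * marg₂ p c.2)) /
          (q (CX c.1, CW c.2) / (marg₁ q (CX c.1) * marg₂ q (CW c.2))) := by
      have hA := h1.ne'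
      have hB := h2.ne'
      have hC := h3.ne'
      have hD := h4.ne'
      have hE := h5.ne'
      unfold approx
      rw [← hq]
      field_simp
      all_goals first
        | exact Or.inl (by ring)
        | ring
    rw [hne, Real.log_div (div_pos (hpos c) (mul_pos h4 h5)).ne'
      (div_pos h1 (mul_pos h2 h3)).ne', mul_sub]
  have hfiber : ∀ d : Xs × Ws,
      (∑ c ∈ Finset.univ.filter (fun c : X × W => (CX c.1, CW c.2) = d), p c) = q d := by
    intro d
    have : Finset.univ.filter (fun c : X × W => (CX c.1, CW c.2) = d)
        = (Finset.univ.filter (fun x => CX x = d.1)) ×ˢ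
          (Finset.univ.filter (fun w => CW w = d.2)) := by
      ext c
      simp [Finset.mem_filter, Finset.mem_product, Prod.ext_iff]
    rw [this, Finset.sum_product]
    rfl
  have claimB : (∑ c : X × W, p c * Real.log (q (CX c.1, CW c.2) /
        (marg₁ q (CX c.1) * marg₂ q (CW c.2)))) = mutualInfoPos q := by
    have step1 : (∑ c : X × W, p c * Real.log (q (CX c.1, CW c.2) /
          (marg₁ q (CX c.1) * marg₂ q (CW c.2))))
        = ∑ d : Xs × Ws, q d * Real.log (q d / (marg₁ q d.1 * marg₂ q d.2)) := by
      rw [← Finset.sum_fiberwise (g := fun c : X × W => (CX c.1, CW c.2))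
        (f := fun c => p c * Real.log (q (CX c.1, CW c.2) /
          (marg₁ q (CX c.1) * marg₂ q (CW c.2))))]
      refine Finset.sum_congr rfl fun d _ => ?_
      have hterm : ∀ c ∈ Finset.univ.filter (fun c : X × W => (CX c.1, CW c.2) = d),
          p c * Real.log (q (CX c.1, CW c.2) / (marg₁ q (CX c.1) * marg₂ q (CW c.2)))
          = p c * Real.log (q d / (marg₁ q d.1 * marg₂ q d.2)) := by
        intro c hc
        rw [Finset.mem_filter] at hc
        have e1 : CX c.1 = d.1 := by rw [← hc.2]
        have e2 : CW c.2 = d.2 := by rw [← hc.2]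
        rw [e1, e2, Prod.mk.eta]
      rw [Finset.sum_congr rfl hterm, ← Finset.sum_mul, hfiber]
    rw [step1]
    unfold mutualInfoPos
    refine (Finset.sum_filter_of_ne fun d _ hd => ?_).symm
    by_contra h
    push_neg at h
    have hz : q d = 0 := le_antisymm h (hq_nonneg d)
    exact hd (by rw [hz]; ring)
  calc (lossA p CX CW : ℝ)
      = mutualInfoFull p - mutualInfoPos q := rfl
    _ = (∑ c : X × W, p c * Real.log (p c / (marg₁ p c.1 * marg₂ p c.2)))
        - ∑ c : X × W, p c * Real.log (q (CX c.1, CW c.2) /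
            (marg₁ q (CX c.1) * marg₂ q (CW c.2))) := by
        rw [claimB]
        congr 1
        unfold mutualInfoFull
        rw [← Finset.sum_product']
        rfl
    _ = ∑ c : X × W, p c * Real.log (p c / approx p CX CW c) := by
        rw [← Finset.sum_sub_distrib]
        exact (Finset.sum_congr rfl fun c _ => (key c)).symm
end

section
/- The KL divergence between p and its co-cluster approximation decomposes along rows (cells): D(p ‖ p̂) = ∑_{x ∈ X} p₁(x) · D(p(·|x) ‖ p̂(·|C_X x)). -/
open scoped BigOperators

lemma KLdiv_pos_eq {T : Type*} [Fintype T] (g h : T → ℝ) (hg : ∀ t, 0 < g t)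
    (hh : ∀ t, 0 < h t) :
    KLdiv g h = ((∑ t, g t * Real.log (g t / h t) : ℝ) : EReal) := by
  unfold KLdiv
  rw [if_neg (by push_neg; intro t _; exact (hh t).ne')]
  congr 1
  apply Finset.sum_congr _ (fun _ _ => rfl)
  rw [Finset.filter_true_of_mem (fun t _ => hg t)]

/-- The KL divergence between `p` and its co-cluster approximation decomposes along
rows (cells): `D(p ‖ p̂) = ∑_x p₁(x) · D(p(·|x) ‖ p̂(·|C_X x))`. -/
theorem KL_row_decomposition {X W Xs Ws : Type*} [Fintype X] [Fintype W] [Nonempty X] [Nonempty W]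
    [Fintype Xs] [Fintype Ws] [DecidableEq Xs] [DecidableEq Ws]
    (p : X × W → ℝ) (hpos : ∀ c, 0 < p c) (hsum : ∑ c, p c = 1)
    (CX : X → Xs) (CW : W → Ws) :
    KLdiv p (approx p CX CW)
      = ∑ x : X, ((marg₁ p x : ℝ) : EReal)
          * KLdiv (condRow p x) (approxCondRow p CX CW (CX x)) := by
  have hm1 : ∀ x, 0 < marg₁ p x := fun x =>
    Finset.sum_pos (fun w _ => hpos _) Finset.univ_nonempty
  have hm2 : ∀ w, 0 < marg₂ p w := fun w =>
    Finset.sum_pos (fun x _ => hpos _) Finset.univ_nonempty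
  have hcc : ∀ x w, 0 < coclust p CX CW (CX x, CW w) := by
    intro x w
    apply Finset.sum_pos
    · intro a _
      exact Finset.sum_pos (fun b _ => hpos _) ⟨w, by simp⟩
    · exact ⟨x, by simp⟩
  have hccnn : ∀ c, 0 ≤ coclust p CX CW c := fun c =>
    Finset.sum_nonneg fun a _ => Finset.sum_nonneg fun b _ => (hpos _).le
  have hccm1 : ∀ x, 0 < marg₁ (coclust p CX CW) (CX x) := by
    intro x
    have w0 : W := Classical.arbitrary W
    exact Finset.sum_pos' (fun ws _ => hccnn _) ⟨CW w0, Finset.mem_univ _, hcc x w0⟩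
  have hccm2 : ∀ w, 0 < marg₂ (coclust p CX CW) (CW w) := by
    intro w
    have x0 : X := Classical.arbitrary X
    exact Finset.sum_pos' (fun xs _ => hccnn _) ⟨CX x0, Finset.mem_univ _, hcc x0 w⟩
  have happrox : ∀ c, 0 < approx p CX CW c := by
    rintro ⟨x, w⟩
    exact div_pos (mul_pos (mul_pos (hcc x w) (hm1 x)) (hm2 w))
      (mul_pos (hccm1 x) (hccm2 w))
  have hcr : ∀ x w, 0 < condRow p x w := fun x w => div_pos (hpos _) (hm1 x)
  have hacr : ∀ x w, 0 < approxCondRow p CX CW (CX x) w := fun x w =>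
    div_pos (mul_pos (hcc x w) (hm2 w)) (mul_pos (hccm1 x) (hccm2 w))
  have hKL : ∀ x, KLdiv (condRow p x) (approxCondRow p CX CW (CX x))
      = ((∑ w, condRow p x w *
          Real.log (condRow p x w / approxCondRow p CX CW (CX x) w) : ℝ) : EReal) :=
    fun x => KLdiv_pos_eq _ _ (hcr x) (hacr x)
  rw [KLdiv_pos_eq _ _ hpos happrox]
  simp only [hKL, ← EReal.coe_mul]
  rw [show (∑ x : X, ((marg₁ p x * ∑ w, condRow p x w *
        Real.log (condRow p x w / approxCondRow p CX CW (CX x) w) : ℝ) : EReal))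
      = ((∑ x : X, marg₁ p x * ∑ w, condRow p x w *
        Real.log (condRow p x w / approxCondRow p CX CW (CX x) w) : ℝ) : EReal) from
    (map_sum (⟨⟨Real.toEReal, EReal.coe_zero⟩, EReal.coe_add⟩ : ℝ →+ EReal) _ _).symm]
  congr 1
  rw [Fintype.sum_prod_type]
  refine Finset.sum_congr rfl fun x _ => ?_
  rw [Finset.mul_sum]
  refine Finset.sum_congr rfl fun w _ => ?_
  have hA : approx p CX CW (x, w) = approxCondRow p CX CW (CX x) w * marg₁ p x := by
    unfold approx approxCondRow
    ring
  have hm : marg₁ p x ≠ 0 := (hm1 x).ne'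
  unfold condRow
  rw [hA, div_div, mul_comm (marg₁ p x) (approxCondRow p CX CW (CX x) w), ← div_div]
  field_simp
end

section
/- The KL divergence between p and its co-cluster approximation decomposes along columns (features): D(p ‖ p̂) = ∑_{w ∈ W} p₂(w) · D(p(·|w) ‖ p̂(·|C_W w)). -/
open scoped BigOperators

/-!
Every cell of `p`, and hence of `p̂`, is positive, so both divergences are plain sums. Writing
the sum over `X × W` column by column, the `w`-th column contributes
`∑ₓ p(x,w) log (p(x,w)/p̂(x,w))`. Dividing both `p(·,w)` and `p̂(·,w)` by `p₂(w)` leaves the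
ratios unchanged and turns them into `p(·|w)` and `p̂(·|C_W w)`, which gives
`p₂(w) · D(p(·|w) ‖ p̂(·|C_W w))`.
-/

open Finset

theorem EReal.coe_finset_sum {ι : Type*} (s : Finset ι) (f : ι → ℝ) :
    ((∑ i ∈ s, f i : ℝ) : EReal) = ∑ i ∈ s, (f i : EReal) := by
  induction s using Finset.cons_induction with
  | empty => simp
  | cons a s ha ih => rw [sum_cons, sum_cons, EReal.coe_add, ih]

theorem KLdiv_of_pos {T : Type*} [Fintype T] {g h : T → ℝ} (hg : ∀ t, 0 < g t)
    (hh : ∀ t, h t ≠ 0) :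
    KLdiv g h = ((∑ t, g t * Real.log (g t / h t) : ℝ) : EReal) := by
  rw [KLdiv, if_neg (fun ⟨t, _, ht⟩ => hh t ht), filter_true_of_mem (fun t _ => hg t)]

theorem mul_div_mul_log_div_div_div {a b c : ℝ} (hc : c ≠ 0) :
    c * (a / c * Real.log (a / c / (b / c))) = a * Real.log (a / b) := by
  rw [div_div_div_cancel_right₀ hc, ← mul_assoc, mul_div_cancel₀ _ hc]

section Marginals

variable {A B : Type*} {p : A × B → ℝ}

theorem le_marg₁ [Fintype B] (hp : ∀ c, 0 ≤ p c) (x : A) (w : B) : p (x, w) ≤ marg₁ p x :=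
  single_le_sum (fun w _ => hp (x, w)) (mem_univ w)

theorem le_marg₂ [Fintype A] (hp : ∀ c, 0 ≤ p c) (x : A) (w : B) : p (x, w) ≤ marg₂ p w :=
  single_le_sum (fun x _ => hp (x, w)) (mem_univ x)

end Marginals

section CoClustering

variable {X W Xs Ws : Type*} [Fintype X] [Fintype W] [DecidableEq Xs] [DecidableEq Ws]
  {p : X × W → ℝ} (CX : X → Xs) (CW : W → Ws)

theorem coclust_nonneg (hp : ∀ c, 0 ≤ p c) (c : Xs × Ws) : 0 ≤ coclust p CX CW c :=
  sum_nonneg fun x _ => sum_nonneg fun w _ => hp (x, w)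

theorem le_coclust (hp : ∀ c, 0 ≤ p c) (x : X) (w : W) :
    p (x, w) ≤ coclust p CX CW (CX x, CW w) :=
  calc p (x, w) ≤ ∑ w' ∈ univ.filter (fun w' => CW w' = CW w), p (x, w') :=
        single_le_sum (fun w' _ => hp (x, w')) (mem_filter.2 ⟨mem_univ w, rfl⟩)
    _ ≤ coclust p CX CW (CX x, CW w) :=
        single_le_sum (f := fun x' => ∑ w' ∈ univ.filter (fun w' => CW w' = CW w), p (x', w'))
          (fun x' _ => sum_nonneg fun w' _ => hp (x', w')) (mem_filter.2 ⟨mem_univ x, rfl⟩)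

theorem approx_pos [Fintype Xs] [Fintype Ws] (hp : ∀ c, 0 < p c) (c : X × W) :
    0 < approx p CX CW c := by
  obtain ⟨x, w⟩ := c
  have hp' : ∀ c, 0 ≤ p c := fun c => (hp c).le
  have hcc : 0 < coclust p CX CW (CX x, CW w) := (hp (x, w)).trans_le (le_coclust CX CW hp' x w)
  have hcc₁ := hcc.trans_le (le_marg₁ (coclust_nonneg CX CW hp') (CX x) (CW w))
  have hcc₂ := hcc.trans_le (le_marg₂ (coclust_nonneg CX CW hp') (CX x) (CW w))
  have h₁ := (hp (x, w)).trans_le (le_marg₁ hp' x w)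
  have h₂ := (hp (x, w)).trans_le (le_marg₂ hp' x w)
  unfold approx
  positivity

theorem approx_eq_approxCondCol_mul_marg₂ [Fintype Xs] [Fintype Ws] (x : X) (w : W) :
    approx p CX CW (x, w) = approxCondCol p CX CW (CW w) x * marg₂ p w := by
  unfold approx approxCondCol
  ring

end CoClustering

theorem KL_col_decomposition_general {X W Xs Ws : Type*} [Fintype X] [Fintype W]
    [Fintype Xs] [Fintype Ws] [DecidableEq Xs] [DecidableEq Ws]
    (p : X × W → ℝ) (hpos : ∀ c, 0 < p c)
    (CX : X → Xs) (CW : W → Ws) :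
    KLdiv p (approx p CX CW)
      = ∑ w : W, ((marg₂ p w : ℝ) : EReal)
          * KLdiv (condCol p w) (approxCondCol p CX CW (CW w)) := by
  have hmarg₂ : ∀ x w, 0 < marg₂ p w := fun x w =>
    (hpos (x, w)).trans_le (le_marg₂ (fun c => (hpos c).le) x w)
  have happrox : ∀ x w, approxCondCol p CX CW (CW w) x = approx p CX CW (x, w) / marg₂ p w :=
    fun x w => eq_div_of_mul_eq (hmarg₂ x w).ne'
      (approx_eq_approxCondCol_mul_marg₂ CX CW x w).symm
  have hcol : ∀ w, KLdiv (condCol p w) (approxCondCol p CX CW (CW w))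
      = ((∑ x, p (x, w) / marg₂ p w
          * Real.log (p (x, w) / marg₂ p w / (approx p CX CW (x, w) / marg₂ p w)) : ℝ)
        : EReal) := by
    intro w
    rw [KLdiv_of_pos (g := condCol p w) (fun x => div_pos (hpos (x, w)) (hmarg₂ x w))
      (fun x => by
        rw [happrox]
        exact (div_pos (approx_pos CX CW hpos (x, w)) (hmarg₂ x w)).ne')]
    simp only [condCol, happrox]
  rw [KLdiv_of_pos hpos (fun c => (approx_pos CX CW hpos c).ne')]
  simp only [hcol, ← EReal.coe_mul, ← EReal.coe_finset_sum]
  rw [Fintype.sum_prod_type, sum_comm]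
  congr 1
  refine sum_congr rfl fun w _ => ?_
  rw [mul_sum]
  exact sum_congr rfl fun x _ => (mul_div_mul_log_div_div_div (hmarg₂ x w).ne').symm

/-- The KL divergence between `p` and its co-cluster approximation decomposes along
columns (features): `D(p ‖ p̂) = ∑_w p₂(w) · D(p(·|w) ‖ p̂(·|C_W w))`. -/
theorem KL_col_decomposition {X W Xs Ws : Type*} [Fintype X] [Fintype W] [Nonempty X] [Nonempty W]
    [Fintype Xs] [Fintype Ws] [DecidableEq Xs] [DecidableEq Ws]
    (p : X × W → ℝ) (hpos : ∀ c, 0 < p c) (hsum : ∑ c, p c = 1)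
    (CX : X → Xs) (CW : W → Ws) :
    KLdiv p (approx p CX CW)
      = ∑ w : W, ((marg₂ p w : ℝ) : EReal)
          * KLdiv (condCol p w) (approxCondCol p CX CW (CW w)) :=
  KL_col_decomposition_general p hpos CX CW
end

section
/- KL form of the elastic coupled co-clustering objective: for every pair of clusterings (C_Y, C_Z), ℓ_T(C_Y, C_Z) = D(q ‖ q̂) + α·D(q₁* ‖ π) + β·D(q₂* ‖ ρ). -/
open scoped BigOperators

/-- KL form of the elastic coupled co-clustering objective: for every pair of
clusterings `(C_Y, C_Z)`,
`ℓ_T(C_Y, C_Z) = D(q ‖ q̂) + α·D(q₁* ‖ π) + β·D(q₂* ‖ ρ)`. -/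
theorem lossT_eq_KL {Y Z Ys Zs : Type*} [Fintype Y] [Fintype Z] [Nonempty Y] [Nonempty Z]
    [Fintype Ys] [Fintype Zs] [DecidableEq Ys] [DecidableEq Zs]
    (q : Y × Z → ℝ) (hqpos : ∀ c, 0 < q c) (hqsum : ∑ c, q c = 1)
    (π : Ys → ℝ) (hπpos : ∀ ys, 0 < π ys) (hπsum : ∑ ys, π ys = 1)
    (ρ : Zs → ℝ) (hρpos : ∀ zs, 0 < ρ zs) (hρsum : ∑ zs, ρ zs = 1)
    (α β : ℝ) (hα : 0 ≤ α) (hβ : 0 ≤ β)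
    (CY : Y → Ys) (CZ : Z → Zs) :
    lossT q CY CZ π ρ α β
      = KLdiv q (approx q CY CZ)
        + (α : EReal) * KLdiv (marg₁ (coclust q CY CZ)) π
        + (β : EReal) * KLdiv (marg₂ (coclust q CY CZ)) ρ := by
  classical
  set qs := coclust q CY CZ with hqsdef
  have hq1 : ∀ y, 0 < marg₁ q y := fun y =>
    Finset.sum_pos (fun w _ => hqpos _) Finset.univ_nonempty
  have hq2 : ∀ z, 0 < marg₂ q z := fun z =>
    Finset.sum_pos (fun x _ => hqpos _) Finset.univ_nonempty
  have hqsnn : ∀ d, 0 ≤ qs d := fun d =>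
    Finset.sum_nonneg fun x _ => Finset.sum_nonneg fun w _ => (hqpos _).le
  have hqspos : ∀ (y : Y) (z : Z), 0 < qs (CY y, CZ z) := by
    intro y z
    apply Finset.sum_pos'
      (fun x _ => Finset.sum_nonneg fun w _ => (hqpos _).le)
    refine ⟨y, Finset.mem_filter.2 ⟨Finset.mem_univ _, rfl⟩, ?_⟩
    exact Finset.sum_pos' (fun w _ => (hqpos _).le)
      ⟨z, Finset.mem_filter.2 ⟨Finset.mem_univ _, rfl⟩, hqpos _⟩
  have hm1 : ∀ y : Y, 0 < marg₁ qs (CY y) := by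
    intro y
    obtain ⟨z0⟩ := ‹Nonempty Z›
    exact Finset.sum_pos' (fun w _ => hqsnn _)
      ⟨CZ z0, Finset.mem_univ _, hqspos y z0⟩
  have hm2 : ∀ z : Z, 0 < marg₂ qs (CZ z) := by
    intro z
    obtain ⟨y0⟩ := ‹Nonempty Y›
    exact Finset.sum_pos' (fun x _ => hqsnn _)
      ⟨CY y0, Finset.mem_univ _, hqspos y0 z⟩
  have happos : ∀ c : Y × Z, 0 < approx q CY CZ c := by
    intro c
    exact div_pos (mul_pos (mul_pos (hqspos c.1 c.2) (hq1 _)) (hq2 _))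
      (mul_pos (hm1 _) (hm2 _))
  -- the KL divergence against approx is a real sum over all of Y × Z
  have hKL : KLdiv q (approx q CY CZ)
      = ((∑ c : Y × Z, q c * Real.log (q c / approx q CY CZ c) : ℝ) : EReal) := by
    unfold KLdiv
    rw [if_neg]
    · norm_cast
      rw [Finset.filter_true_of_mem (fun c _ => hqpos c)]
    · rintro ⟨t, -, h0⟩
      exact (happos t).ne' h0
  -- abbreviation for the cluster-level log term
  set F : Ys × Zs → ℝ :=
    fun d => Real.log (qs d / (marg₁ qs d.1 * marg₂ qs d.2)) with hF
  -- pointwise log decomposition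
  have key : ∀ c : Y × Z, q c * Real.log (q c / approx q CY CZ c)
      = q c * Real.log (q c / (marg₁ q c.1 * marg₂ q c.2))
        - q c * F (CY c.1, CZ c.2) := by
    intro c
    rw [← mul_sub]
    congr 1
    have h1 : Real.log (q c / approx q CY CZ c)
        = Real.log (q c) - Real.log (approx q CY CZ c) :=
      Real.log_div (hqpos c).ne' (happos c).ne'
    have h2 : Real.log (approx q CY CZ c)
        = Real.log (qs (CY c.1, CZ c.2)) + Real.log (marg₁ q c.1)
          + Real.log (marg₂ q c.2)
          - (Real.log (marg₁ qs (CY c.1)) + Real.log (marg₂ qs (CZ c.2))) := by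
      show Real.log (qs (CY c.1, CZ c.2) * marg₁ q c.1 * marg₂ q c.2 /
          (marg₁ qs (CY c.1) * marg₂ qs (CZ c.2))) = _
      rw [Real.log_div (mul_pos (mul_pos (hqspos c.1 c.2) (hq1 _)) (hq2 _)).ne'
          (mul_pos (hm1 _) (hm2 _)).ne',
        Real.log_mul (mul_pos (hqspos c.1 c.2) (hq1 _)).ne' (hq2 _).ne',
        Real.log_mul (hqspos c.1 c.2).ne' (hq1 _).ne',
        Real.log_mul (hm1 _).ne' (hm2 _).ne']
    have h3 : Real.log (q c / (marg₁ q c.1 * marg₂ q c.2))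
        = Real.log (q c) - (Real.log (marg₁ q c.1) + Real.log (marg₂ q c.2)) := by
      rw [Real.log_div (hqpos c).ne' (mul_pos (hq1 _) (hq2 _)).ne',
        Real.log_mul (hq1 _).ne' (hq2 _).ne']
    have h4 : F (CY c.1, CZ c.2)
        = Real.log (qs (CY c.1, CZ c.2))
          - (Real.log (marg₁ qs (CY c.1)) + Real.log (marg₂ qs (CZ c.2))) := by
      show Real.log (qs (CY c.1, CZ c.2) / (marg₁ qs (CY c.1) * marg₂ qs (CZ c.2))) = _
      rw [Real.log_div (hqspos c.1 c.2).ne' (mul_pos (hm1 _) (hm2 _)).ne',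
        Real.log_mul (hm1 _).ne' (hm2 _).ne']
    rw [h1, h2, h3, h4]; ring
  -- regrouping the cluster-level sum
  have regroup : ∑ c : Y × Z, q c * F (CY c.1, CZ c.2)
      = ∑ d : Ys × Zs, qs d * F d := by
    rw [← Finset.sum_fiberwise Finset.univ
      (fun c : Y × Z => (CY c.1, CZ c.2)) (fun c => q c * F (CY c.1, CZ c.2))]
    refine Finset.sum_congr rfl fun d _ => ?_
    have hs1 : ∑ c ∈ Finset.univ.filter
        (fun c : Y × Z => (CY c.1, CZ c.2) = d), q c * F (CY c.1, CZ c.2)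
        = ∑ c ∈ Finset.univ.filter
        (fun c : Y × Z => (CY c.1, CZ c.2) = d), q c * F d := by
      refine Finset.sum_congr rfl fun c hc => ?_
      rw [(Finset.mem_filter.1 hc).2]
    rw [hs1, ← Finset.sum_mul]
    congr 1
    have hfe : Finset.univ.filter (fun c : Y × Z => (CY c.1, CZ c.2) = d)
        = (Finset.univ.filter fun y => CY y = d.1) ×ˢ
          (Finset.univ.filter fun z => CZ z = d.2) := by
      rw [← Finset.filter_product, ← Finset.univ_product_univ]
      congr 1
      ext c
      simp [Prod.ext_iff]
    rw [hfe, Finset.sum_product]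
    rfl
  -- drop the zero entries to match mutualInfoPos
  have hdrop : ∑ d : Ys × Zs, qs d * F d = mutualInfoPos qs := by
    unfold mutualInfoPos
    rw [Finset.sum_filter_of_ne]
    intro d _ hne
    rcases lt_or_eq_of_le (hqsnn d) with h | h
    · exact h
    · exact absurd (by rw [← h, zero_mul]) hne
  -- put everything together
  unfold lossT
  rw [hKL]
  congr 2
  norm_cast
  have hsum : ∑ c : Y × Z, q c * Real.log (q c / approx q CY CZ c)
      = (∑ c : Y × Z, q c * Real.log (q c / (marg₁ q c.1 * marg₂ q c.2)))
        - ∑ c : Y × Z, q c * F (CY c.1, CZ c.2) := by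
    rw [← Finset.sum_sub_distrib]
    exact Finset.sum_congr rfl fun c _ => key c
  rw [hsum, regroup, hdrop]
  congr 1
  unfold mutualInfoFull
  rw [Fintype.sum_prod_type]
end
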